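/- Let M ≥ 1, K ≥ 1, λ_SR > 0, λ_RE > 0, λ_RD > 0, λ_SE > 0, λ_JE > 0, η > 0, Ψ > 0, Φ > 0 and γ_th > 0. Let G be exponential(λ_SE), X the maximum of M i.i.d. exponential(λ_SR) random variables, Z exponential(λ_RE), W exponential(λ_RD), and Ξ Gamma-distributed with shape K and rate λ_JE, all mutually independent, and set ρ*(W) = 1/(1 + √(ηW)). Then P( max( Ψ G/(Φ Ξ), η ρ*(W)(1−ρ*(W)) Ψ X Z/(η ρ*(W) Z + (1−ρ*(W)) Φ Ξ + (1−ρ*(W))) ) ≥ γ_th ) = 1 − ∫₀^∞ ∫₀^∞ (1 − exp(−γ_th λ_SE Φ x/Ψ)) · P( η Ψ X Z / ( η ((1+√(ηw))/√(ηw)) Z + (1+√(ηw))(Φ x + 1) ) < γ_th ) · λ_RD e^{−λ_RD w} · (λ_JE^K/(K−1)!) x^{K−1} e^{−λ_JE x} dw dx. -/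

import Mathlib

/-!
The intercept event fails exactly when both the direct SINR `Ψ G / (Φ Ξ)` and the relayed SINR
are below `γ_th`. Conditioning on the independent pair `(Ξ, W) = (x, w)`, the first event becomes
`G < γ_th Φ x / Ψ` and the second an event about `(max X, Z)` alone; these are independent, and
the first has probability `1 - exp (-γ_th λ_SE Φ x / Ψ)`. Integrating over the Gamma law of `Ξ`
and the exponential law of `W` against their densities gives the formula.
-/

open MeasureTheory ProbabilityTheory Real
open scoped ENNReal Nat

namespace ProbabilityTheory

lemma ae_pos_gammaMeasure (a r : ℝ) : ∀ᵐ x ∂gammaMeasure a r, 0 < x := by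
  have hIic : gammaMeasure a r (Set.Iic 0) = 0 := by
    rw [gammaMeasure, withDensity_apply _ measurableSet_Iic, ← setLIntegral_congr Iio_ae_eq_Iic,
      lintegral_gammaPDF_of_nonpos le_rfl]
  exact (measure_eq_zero_iff_ae_notMem.1 hIic).mono fun _ h ↦ not_le.1 h

lemma expMeasure_Iio {r c : ℝ} (hr : 0 < r) (hc : 0 ≤ c) :
    expMeasure r (Set.Iio c) = ENNReal.ofReal (1 - exp (-(r * c))) := by
  have := isProbabilityMeasure_expMeasure hr
  have : NullSingletonClass (expMeasure r) := by
    unfold expMeasure gammaMeasure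
    infer_instance
  rw [measure_congr Iio_ae_eq_Iic, ← ofReal_cdf, cdf_expMeasure_eq hr, if_pos hc]

lemma gammaPDFReal_natCast {n : ℕ} (hn : 1 ≤ n) (r : ℝ) {x : ℝ} (hx : 0 ≤ x) :
    gammaPDFReal n r x = r ^ n / (n - 1)! * x ^ (n - 1) * exp (-r * x) := by
  obtain ⟨k, rfl⟩ := Nat.exists_eq_add_of_le' hn
  simp [gammaPDFReal, hx, Real.Gamma_nat_eq_factorial, ← Real.rpow_natCast]

lemma toReal_lintegral_gammaMeasure_natCast {n : ℕ} (hn : 1 ≤ n) {r : ℝ} (hr : 0 ≤ r)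
    {F : ℝ → ℝ≥0∞} (hF : Measurable F) (hF_ne_top : ∀ x, F x ≠ ∞) :
    (∫⁻ x, F x ∂gammaMeasure n r).toReal =
      ∫ x in Set.Ioi 0, (F x).toReal * (r ^ n / (n - 1)! * x ^ (n - 1) * exp (-r * x)) := by
  rw [← integral_toReal hF.aemeasurable (ae_of_all _ fun x ↦ (hF_ne_top x).lt_top),
    ← Measure.restrict_eq_self_of_ae_mem (s := Set.Ioi 0) (ae_pos_gammaMeasure n r), gammaMeasure,
    restrict_withDensity measurableSet_Ioi, integral_withDensity_eq_integral_toReal_smul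
      (measurable_gammaPDFReal n r).ennreal_ofReal (f := gammaPDF n r)
      (ae_of_all _ fun _ ↦ ENNReal.ofReal_lt_top)]
  refine setIntegral_congr_fun measurableSet_Ioi fun x (hx : 0 < x) ↦ ?_
  rw [gammaPDF, gammaPDFReal_natCast hn r hx.le, ENNReal.toReal_ofReal (by positivity),
    smul_eq_mul, mul_comm]

lemma toReal_lintegral_expMeasure {r : ℝ} (hr : 0 ≤ r) {F : ℝ → ℝ≥0∞} (hF : Measurable F)
    (hF_ne_top : ∀ x, F x ≠ ∞) :
    (∫⁻ x, F x ∂expMeasure r).toReal = ∫ x in Set.Ioi 0, (F x).toReal * (r * exp (-r * x)) := by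
  rw [expMeasure]
  simpa using toReal_lintegral_gammaMeasure_natCast (n := 1) le_rfl hr hF hF_ne_top

lemma toReal_lintegral_gammaMeasure_lintegral_expMeasure {n : ℕ} (hn : 1 ≤ n) {a b : ℝ}
    (ha : 0 ≤ a) (hb : 0 < b) {F : ℝ → ℝ → ℝ≥0∞} (hF : Measurable (Function.uncurry F))
    (hF_le : ∀ x w, F x w ≤ 1) :
    (∫⁻ x, ∫⁻ w, F x w ∂expMeasure b ∂gammaMeasure n a).toReal =
      ∫ x in Set.Ioi 0, ∫ w in Set.Ioi 0, (F x w).toReal * (b * exp (-b * w)) *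
        (a ^ n / (n - 1)! * x ^ (n - 1) * exp (-a * x)) := by
  have := isProbabilityMeasure_expMeasure hb
  have hinner (x : ℝ) : ∫⁻ w, F x w ∂expMeasure b ≤ 1 :=
    (lintegral_mono (hF_le x)).trans_eq (by simp)
  rw [toReal_lintegral_gammaMeasure_natCast (F := fun x ↦ ∫⁻ w, F x w ∂expMeasure b) hn ha
    hF.lintegral_prod_right' fun x ↦ ne_top_of_le_ne_top ENNReal.one_ne_top (hinner x)]
  refine setIntegral_congr_fun measurableSet_Ioi fun x _ ↦ ?_
  rw [toReal_lintegral_expMeasure (F := F x) hb.le (hF.comp measurable_prodMk_left)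
    fun w ↦ ne_top_of_le_ne_top ENNReal.one_ne_top (hF_le x w), ← integral_mul_const]

lemma toReal_measure_setOf_le_max {Ω : Type*} [MeasurableSpace Ω] {μ : Measure Ω}
    [IsProbabilityMeasure μ] {f g : Ω → ℝ} (hf : Measurable f) (hg : Measurable g) (c : ℝ) :
    (μ {ω | c ≤ max (f ω) (g ω)}).toReal = 1 - (μ {ω | f ω < c ∧ g ω < c}).toReal := by
  have hcompl : {ω | c ≤ max (f ω) (g ω)} = {ω | f ω < c ∧ g ω < c}ᶜ := by
    ext ω
    simp only [Set.mem_compl_iff, Set.mem_ofPred_eq, ← max_lt_iff, not_lt]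
  have hmeas : MeasurableSet {ω | f ω < c ∧ g ω < c} :=
    (measurableSet_lt hf measurable_const).inter (measurableSet_lt hg measurable_const)
  rw [hcompl, prob_compl_eq_one_sub hmeas,
    ENNReal.toReal_sub_of_le prob_le_one ENNReal.one_ne_top, ENNReal.toReal_one]

section Conditioning

variable {Ω α β : Type*} [MeasurableSpace Ω] [MeasurableSpace α] [MeasurableSpace β]
  {μ : Measure Ω} [IsFiniteMeasure μ] {U : Ω → α} {V : Ω → β} {D : Set (α × β)}

lemma measurable_measure_setOf_prodMk_mem (hV : Measurable V) (hD : MeasurableSet D) :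
    Measurable fun u ↦ μ {ω | (u, V ω) ∈ D} := by
  convert measurable_measure_prodMk_left (ν := μ.map V) hD using 2 with u
  rw [Measure.map_apply hV (measurable_prodMk_left hD)]
  rfl

lemma IndepFun.measure_mem_eq_lintegral (hUV : IndepFun U V μ) (hU : Measurable U)
    (hV : Measurable V) (hD : MeasurableSet D) :
    μ {ω | (U ω, V ω) ∈ D} = ∫⁻ u, μ {ω | (u, V ω) ∈ D} ∂μ.map U := by
  change μ ((fun ω ↦ (U ω, V ω)) ⁻¹' D) = _
  rw [← Measure.map_apply (hU.prodMk hV) hD,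
    (indepFun_iff_map_prod_eq_prod_map_map hU.aemeasurable hV.aemeasurable).1 hUV,
    Measure.prod_apply hD]
  refine lintegral_congr fun u ↦ ?_
  rw [Measure.map_apply hV (measurable_prodMk_left hD)]
  rfl

end Conditioning

lemma measurable_iSup_comap {ι Ω β : Type*} [mβ : MeasurableSpace β] {f : ι → Ω → β}
    {S : Set ι} {i : ι} (hi : i ∈ S) : Measurable[⨆ j ∈ S, mβ.comap (f j)] (f i) :=
  (comap_measurable (f i)).mono (le_iSup₂ (f := fun j _ ↦ mβ.comap (f j)) i hi) le_rfl

lemma iIndepFun.indepFun_of_measurable_iSup {ι Ω β γ δ : Type*} [MeasurableSpace Ω]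
    {μ : Measure Ω} [mβ : MeasurableSpace β] [MeasurableSpace γ] [MeasurableSpace δ]
    {f : ι → Ω → β} (h : iIndepFun f μ) (hf : ∀ i, Measurable (f i)) {S T : Set ι}
    (hST : Disjoint S T) {U : Ω → γ} {V : Ω → δ}
    (hU : Measurable[⨆ i ∈ S, mβ.comap (f i)] U) (hV : Measurable[⨆ i ∈ T, mβ.comap (f i)] V) :
    IndepFun U V μ := by
  rw [IndepFun_iff_Indep]
  exact indep_of_indep_of_le_right (indep_of_indep_of_le_left
    (indep_iSup_of_disjoint (fun i ↦ (hf i).comap_le) ((iIndepFun_iff_iIndep _ _ _).1 h) hST)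
    hU.comap_le) hV.comap_le

end ProbabilityTheory

/-- The paper's `γ_RE`: the eavesdropper's SINR on the relay hop for splitting ratio `ρ`, jammer
gain `ξ`, best source–relay gain `x` and relay–eavesdropper gain `z`. -/
noncomputable def eveRelaySINR (η Ψ Φ ρ ξ x z : ℝ) : ℝ :=
  η * ρ * (1 - ρ) * Ψ * x * z / (η * ρ * z + (1 - ρ) * Φ * ξ + (1 - ρ))

noncomputable def eveRelaySINRDynamic (η Ψ Φ w ξ x z : ℝ) : ℝ :=
  η * Ψ * x * z / (η * ((1 + √(η * w)) / √(η * w)) * z + (1 + √(η * w)) * (Φ * ξ + 1))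

lemma eveRelaySINR_one_div_one_add_sqrt {η w : ℝ} (hηw : 0 < η * w) (Ψ Φ ξ x z : ℝ) :
    eveRelaySINR η Ψ Φ (1 / (1 + √(η * w))) ξ x z = eveRelaySINRDynamic η Ψ Φ w ξ x z := by
  set s := √(η * w)
  have hs : 0 < s := Real.sqrt_pos.2 hηw
  have hden : η * ((1 + s) / s) * z + (1 + s) * (Φ * ξ + 1) = (1 + s) ^ 2 / s *
      (η * (1 / (1 + s)) * z + (1 - 1 / (1 + s)) * Φ * ξ + (1 - 1 / (1 + s))) := by
    field_simp
    ring
  rw [eveRelaySINR, eveRelaySINRDynamic, hden, ← div_div]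
  congr 1
  field_simp
  ring

section Intercept

variable {Ω : Type*} [MeasurableSpace Ω] {P : Measure Ω}

lemma indepFun_of_iIndepFun_sumElim {M : ℕ} {X : Fin M → Ω → ℝ} {G Z W Ξ : Ω → ℝ}
    (h : iIndepFun (Sum.elim X ![G, Z, W, Ξ]) P) (hX : ∀ m, Measurable (X m))
    (hG : Measurable G) (hZ : Measurable Z) (hW : Measurable W) (hΞ : Measurable Ξ) :
    IndepFun (fun ω ↦ (Ξ ω, W ω)) (fun ω ↦ (G ω, ⨆ m, X m ω, Z ω)) P ∧
      IndepFun G (fun ω ↦ (⨆ m, X m ω, Z ω)) P ∧ IndepFun Ξ W P := by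
  have hf : ∀ i, Measurable (Sum.elim X ![G, Z, W, Ξ] i) := by
    rintro (m | j)
    · exact hX m
    · fin_cases j <;> assumption
  have hmem : ∀ {S : Set (Fin M ⊕ Fin 4)} {i}, i ∈ S →
      Measurable[⨆ j ∈ S, MeasurableSpace.comap (Sum.elim X ![G, Z, W, Ξ] j) _]
        (Sum.elim X ![G, Z, W, Ξ] i) := measurable_iSup_comap
  have hmax : ∀ {S : Set (Fin M ⊕ Fin 4)}, (∀ m, Sum.inl m ∈ S) →
      Measurable[⨆ j ∈ S, MeasurableSpace.comap (Sum.elim X ![G, Z, W, Ξ] j) _]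
        (fun ω ↦ ⨆ m, X m ω) := fun hS ↦ Measurable.iSup fun m ↦ hmem (hS m)
  refine ⟨h.indepFun_of_measurable_iSup hf (disjoint_compl_right (a := {.inr 3, .inr 2}))
      ((hmem (i := .inr 3) (by simp)).prodMk (hmem (i := .inr 2) (by simp)))
      ((hmem (i := .inr 0) (by simp)).prodMk ((hmax (by simp)).prodMk
        (hmem (i := .inr 1) (by simp)))),
    h.indepFun_of_measurable_iSup hf (disjoint_compl_right (a := {.inr 0}))
      (hmem (i := .inr 0) (by simp)) ((hmax (by simp)).prodMk (hmem (i := .inr 1) (by simp))),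
    h.indepFun (i := .inr 3) (j := .inr 2) (by simp)⟩

variable [IsProbabilityMeasure P] {G Y Z W Ξ : Ω → ℝ} {K : ℕ} {lamSE lamRD lamJE η Ψ Φ γth : ℝ}

lemma measure_not_intercept_eq_lintegral (hG : Measurable G) (hY : Measurable Y)
    (hZ : Measurable Z) (hW : Measurable W) (hΞ : Measurable Ξ)
    (hUV : IndepFun (fun ω ↦ (Ξ ω, W ω)) (fun ω ↦ (G ω, Y ω, Z ω)) P)
    (hGV : IndepFun G (fun ω ↦ (Y ω, Z ω)) P) (hΞW : IndepFun Ξ W P)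
    (hlawG : P.map G = expMeasure lamSE) (hlawW : P.map W = expMeasure lamRD)
    (hlawΞ : P.map Ξ = gammaMeasure K lamJE) (hSE : 0 < lamSE) (hη : 0 < η) (hΨ : 0 < Ψ)
    (hΦ : 0 < Φ) (hγ : 0 < γth) :
    P {ω | Ψ * G ω / (Φ * Ξ ω) < γth ∧
        eveRelaySINR η Ψ Φ (1 / (1 + √(η * W ω))) (Ξ ω) (Y ω) (Z ω) < γth} =
      ∫⁻ x, ∫⁻ w, ENNReal.ofReal (1 - exp (-γth * lamSE * Φ * x / Ψ)) *
        P {ω | eveRelaySINRDynamic η Ψ Φ w x (Y ω) (Z ω) < γth}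
          ∂expMeasure lamRD ∂gammaMeasure K lamJE := by
  set D : Set ((ℝ × ℝ) × ℝ × ℝ × ℝ) := {p | Ψ * p.2.1 / (Φ * p.1.1) < γth ∧
    eveRelaySINR η Ψ Φ (1 / (1 + √(η * p.1.2))) p.1.1 p.2.2.1 p.2.2.2 < γth}
  have hD : MeasurableSet D := by
    simp only [D, eveRelaySINR, Set.ofPred_and]
    exact (measurableSet_lt (by fun_prop) measurable_const).inter
      (measurableSet_lt (by fun_prop) measurable_const)
  have hV := hG.prodMk (hY.prodMk hZ)
  change P {ω | ((Ξ ω, W ω), G ω, Y ω, Z ω) ∈ D} = _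
  rw [hUV.measure_mem_eq_lintegral (hΞ.prodMk hW) hV hD,
    (indepFun_iff_map_prod_eq_prod_map_map hΞ.aemeasurable hW.aemeasurable).1 hΞW,
    lintegral_prod _ (measurable_measure_setOf_prodMk_mem hV hD).aemeasurable, hlawΞ, hlawW]
  refine lintegral_congr_ae ?_
  filter_upwards [ae_pos_gammaMeasure K lamJE] with x hx
  refine lintegral_congr_ae ?_
  filter_upwards [ae_pos_gammaMeasure 1 lamRD] with w hw
  have hsection : {ω | ((x, w), G ω, Y ω, Z ω) ∈ D} = G ⁻¹' Set.Iio (γth * Φ * x / Ψ) ∩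
      (fun ω ↦ (Y ω, Z ω)) ⁻¹' {q | eveRelaySINRDynamic η Ψ Φ w x q.1 q.2 < γth} := by
    ext ω
    simp only [D, Set.mem_ofPred_eq, Set.mem_inter_iff, Set.mem_preimage, Set.mem_Iio,
      eveRelaySINR_one_div_one_add_sqrt (mul_pos hη hw)]
    rw [div_lt_iff₀ (by positivity), lt_div_iff₀ hΨ, mul_comm Ψ, mul_assoc γth]
  rw [hsection, hGV.measure_inter_preimage_eq_mul _ _ measurableSet_Iio
      (measurableSet_lt (by unfold eveRelaySINRDynamic; fun_prop) measurable_const),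
    ← Measure.map_apply hG measurableSet_Iio, hlawG, expMeasure_Iio hSE (by positivity)]
  congr 4
  ring

lemma toReal_measure_not_intercept_eq_integral (hK : 1 ≤ K) (hG : Measurable G)
    (hY : Measurable Y) (hZ : Measurable Z) (hW : Measurable W) (hΞ : Measurable Ξ)
    (hUV : IndepFun (fun ω ↦ (Ξ ω, W ω)) (fun ω ↦ (G ω, Y ω, Z ω)) P)
    (hGV : IndepFun G (fun ω ↦ (Y ω, Z ω)) P) (hΞW : IndepFun Ξ W P)
    (hlawG : P.map G = expMeasure lamSE) (hlawW : P.map W = expMeasure lamRD)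
    (hlawΞ : P.map Ξ = gammaMeasure K lamJE) (hSE : 0 < lamSE) (hRD : 0 < lamRD)
    (hJE : 0 < lamJE) (hη : 0 < η) (hΨ : 0 < Ψ) (hΦ : 0 < Φ) (hγ : 0 < γth) :
    (P {ω | Ψ * G ω / (Φ * Ξ ω) < γth ∧
        eveRelaySINR η Ψ Φ (1 / (1 + √(η * W ω))) (Ξ ω) (Y ω) (Z ω) < γth}).toReal =
      ∫ x in Set.Ioi 0, ∫ w in Set.Ioi 0, (1 - exp (-γth * lamSE * Φ * x / Ψ)) *
        (P {ω | eveRelaySINRDynamic η Ψ Φ w x (Y ω) (Z ω) < γth}).toReal *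
        (lamRD * exp (-lamRD * w)) * (lamJE ^ K / (K - 1)! * x ^ (K - 1) * exp (-lamJE * x)) := by
  rw [measure_not_intercept_eq_lintegral hG hY hZ hW hΞ hUV hGV hΞW hlawG hlawW hlawΞ hSE hη hΨ
    hΦ hγ, toReal_lintegral_gammaMeasure_lintegral_expMeasure hK hJE.le hRD]
  · refine setIntegral_congr_fun measurableSet_Ioi fun x (hx : 0 < x) ↦
      integral_congr_ae (ae_of_all _ fun w ↦ ?_)
    have hexp : exp (-γth * lamSE * Φ * x / Ψ) ≤ 1 := by
      rw [exp_le_one_iff, neg_mul, neg_mul, neg_mul, neg_div, neg_nonpos]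
      positivity
    simp only [ENNReal.toReal_mul, ENNReal.toReal_ofReal (sub_nonneg.2 hexp)]
  · refine Measurable.mul (by fun_prop) (measurable_measure_setOf_prodMk_mem (hY.prodMk hZ)
      (D := {q : (ℝ × ℝ) × ℝ × ℝ | eveRelaySINRDynamic η Ψ Φ q.1.2 q.1.1 q.2.1 q.2.2 < γth})
      (measurableSet_lt (by unfold eveRelaySINRDynamic; fun_prop) measurable_const))
  · exact fun x w ↦ mul_le_one' (ENNReal.ofReal_le_one.2 (sub_le_self _ (exp_nonneg _)))
      prob_le_one

end Intercept

theorem statement_13_general {Ω : Type*} [MeasurableSpace Ω] (P : Measure Ω) [IsProbabilityMeasure P]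
    (M K : ℕ) (hK : 1 ≤ K)
    (lamRD lamSE lamJE η Ψ Φ γth : ℝ)
    (hRD : 0 < lamRD) (hSE : 0 < lamSE) (hJE : 0 < lamJE)
    (hη : 0 < η) (hΨ : 0 < Ψ) (hΦ : 0 < Φ) (hγ : 0 < γth)
    (G : Ω → ℝ) (X : Fin M → Ω → ℝ) (Z : Ω → ℝ) (W : Ω → ℝ) (Ξ : Ω → ℝ)
    (hmeasG : Measurable G) (hmeasX : ∀ m, Measurable (X m)) (hmeasZ : Measurable Z)
    (hmeasW : Measurable W) (hmeasΞ : Measurable Ξ)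
    (hindep : iIndepFun (Sum.elim X ![G, Z, W, Ξ]) P)
    (hlawG : P.map G = expMeasure lamSE)
    (hlawW : P.map W = expMeasure lamRD)
    (hlawΞ : P.map Ξ = gammaMeasure K lamJE)
    (ρstar : ℝ → ℝ) (hρstar : ∀ w, ρstar w = 1 / (1 + Real.sqrt (η * w))) :
    (P {ω | γth ≤ max (Ψ * G ω / (Φ * Ξ ω))
        (η * ρstar (W ω) * (1 - ρstar (W ω)) * Ψ * (⨆ m, X m ω) * Z ω /
          (η * ρstar (W ω) * Z ω + (1 - ρstar (W ω)) * Φ * Ξ ω +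
            (1 - ρstar (W ω))))}).toReal =
      1 - ∫ x in Set.Ioi (0 : ℝ), ∫ w in Set.Ioi (0 : ℝ),
        (1 - Real.exp (-γth * lamSE * Φ * x / Ψ)) *
        (P {ω | η * Ψ * (⨆ m, X m ω) * Z ω /
            (η * ((1 + Real.sqrt (η * w)) / Real.sqrt (η * w)) * Z ω +
              (1 + Real.sqrt (η * w)) * (Φ * x + 1)) < γth}).toReal *
        (lamRD * Real.exp (-lamRD * w)) *
        (lamJE ^ K / (K - 1).factorial * x ^ (K - 1) * Real.exp (-lamJE * x)) := by
  obtain rfl : ρstar = fun w ↦ 1 / (1 + √(η * w)) := funext hρstar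
  have hY : Measurable fun ω ↦ ⨆ m, X m ω := Measurable.iSup hmeasX
  obtain ⟨hUV, hGV, hΞW⟩ :=
    indepFun_of_iIndepFun_sumElim hindep hmeasX hmeasG hmeasZ hmeasW hmeasΞ
  rw [toReal_measure_setOf_le_max (by fun_prop) (by fun_prop)]
  exact congrArg (1 - ·) (toReal_measure_not_intercept_eq_integral hK hmeasG hY hmeasZ hmeasW
    hmeasΞ hUV hGV hΞW hlawG hlawW hlawΞ hSE hRD hJE hη hΨ hΦ hγ)

/-- Theorem 4 of the paper (exact conditional double-integral form, Appendix D): intercept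
probability of the DPSR scheme with dynamic splitting ratio `ρ*(W) = 1/(1+√(ηW))`. `G` is the
exponential(λ_SE) source-to-eavesdropper gain, `X` the maximum of `M` i.i.d.
exponential(λ_SR) source-to-relay gains, `Z` the exponential(λ_RE) relay-to-eavesdropper gain,
`W` the exponential(λ_RD) relay-to-destination gain, and `Ξ` the Gamma(K, λ_JE)-distributed
aggregate jammer-to-eavesdropper gain, all mutually independent. -/
theorem statement_13 {Ω : Type*} [MeasurableSpace Ω] (P : Measure Ω) [IsProbabilityMeasure P]
    (M K : ℕ) (hM : 1 ≤ M) (hK : 1 ≤ K)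
    (lamSR lamRE lamRD lamSE lamJE η Ψ Φ γth : ℝ)
    (hSR : 0 < lamSR) (hRE : 0 < lamRE) (hRD : 0 < lamRD) (hSE : 0 < lamSE) (hJE : 0 < lamJE)
    (hη : 0 < η) (hΨ : 0 < Ψ) (hΦ : 0 < Φ) (hγ : 0 < γth)
    (G : Ω → ℝ) (X : Fin M → Ω → ℝ) (Z : Ω → ℝ) (W : Ω → ℝ) (Ξ : Ω → ℝ)
    (hmeasG : Measurable G) (hmeasX : ∀ m, Measurable (X m)) (hmeasZ : Measurable Z)
    (hmeasW : Measurable W) (hmeasΞ : Measurable Ξ)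
    (hindep : iIndepFun (Sum.elim X ![G, Z, W, Ξ]) P)
    (hlawG : P.map G = expMeasure lamSE)
    (hlawX : ∀ m, P.map (X m) = expMeasure lamSR)
    (hlawZ : P.map Z = expMeasure lamRE)
    (hlawW : P.map W = expMeasure lamRD)
    (hlawΞ : P.map Ξ = gammaMeasure K lamJE)
    (ρstar : ℝ → ℝ) (hρstar : ∀ w, ρstar w = 1 / (1 + Real.sqrt (η * w))) :
    (P {ω | γth ≤ max (Ψ * G ω / (Φ * Ξ ω))
        (η * ρstar (W ω) * (1 - ρstar (W ω)) * Ψ * (⨆ m, X m ω) * Z ω /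
          (η * ρstar (W ω) * Z ω + (1 - ρstar (W ω)) * Φ * Ξ ω +
            (1 - ρstar (W ω))))}).toReal =
      1 - ∫ x in Set.Ioi (0 : ℝ), ∫ w in Set.Ioi (0 : ℝ),
        (1 - Real.exp (-γth * lamSE * Φ * x / Ψ)) *
        (P {ω | η * Ψ * (⨆ m, X m ω) * Z ω /
            (η * ((1 + Real.sqrt (η * w)) / Real.sqrt (η * w)) * Z ω +
              (1 + Real.sqrt (η * w)) * (Φ * x + 1)) < γth}).toReal *
        (lamRD * Real.exp (-lamRD * w)) *
        (lamJE ^ K / (K - 1).factorial * x ^ (K - 1) * Real.exp (-lamJE * x)) :=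
  statement_13_general P M K hK lamRD lamSE lamJE η Ψ Φ γth hRD hSE hJE hη hΨ hΦ hγ G X Z W Ξ hmeasG
    hmeasX hmeasZ hmeasW hmeasΞ hindep hlawG hlawW hlawΞ ρstar hρstar
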